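/- The norm of the nth Fibonacci quaternion F_n in H(β₁,β₂) satisfies n(F_n) = h_{2n+2}^{1+2β₂, 3β₂} + (β₁−1)·h_{2n+3}^{1+2β₂, β₂} − 2(β₁−1)(1+β₂)·f(n)·f(n+1), where h_k^{p,q} denotes the kth term of the generalized Fibonacci sequence with initial values p, q. -/
import Mathlib


open scoped Quaternion

/-- The generalized Fibonacci sequence with real initial values `p`, `q`. -/
def gfibR (p q : ℝ) : ℕ → ℝ
  | 0 => p
  | 1 => q
  | n + 2 => gfibR p q (n + 1) + gfibR p q n

/-- The norm of `a = a₁ + a₂e₂ + a₃e₃ + a₄e₄` in `H(β₁, β₂) = ℍ[ℝ, -β₁, -β₂]`: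
`n(a) = a₁² + β₁a₂² + β₂a₃² + β₁β₂a₄²`. -/
def quatNorm (β₁ β₂ : ℝ) (a : ℍ[ℝ, -β₁, -β₂]) : ℝ :=
  a.re ^ 2 + β₁ * a.imI ^ 2 + β₂ * a.imJ ^ 2 + β₁ * β₂ * a.imK ^ 2

/-- The `n`th Fibonacci quaternion in `H(β₁, β₂)`. -/
def fibQuat (β₁ β₂ : ℝ) (n : ℕ) : ℍ[ℝ, -β₁, -β₂] :=
  ⟨Nat.fib n, Nat.fib (n + 1), Nat.fib (n + 2), Nat.fib (n + 3)⟩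

lemma gfibR_eq (p q : ℝ) : ∀ k, gfibR p q (k + 1) = p * Nat.fib k + q * Nat.fib (k + 1)
  | 0 => by simp [gfibR]
  | 1 => by simp [gfibR]; ring
  | k + 2 => by
      have h2 : (Nat.fib (k + 2) : ℝ) = Nat.fib (k + 1) + Nat.fib k := by
        rw [Nat.fib_add_two]; push_cast; ring
      have h3 : (Nat.fib (k + 3) : ℝ) = Nat.fib (k + 2) + Nat.fib (k + 1) := by
        rw [show k + 3 = (k + 1) + 2 from rfl, Nat.fib_add_two]; push_cast; ring
      rw [show k + 2 + 1 = (k + 1) + 2 from rfl]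
      rw [gfibR, gfibR_eq p q k, gfibR_eq p q (k + 1)]
      rw [show k + 1 + 1 = k + 2 from rfl, show k + 2 + 1 = k + 3 from rfl]
      linear_combination (-p) * h2 + (-q) * h3

theorem fibQuat_norm (β₁ β₂ : ℝ) (n : ℕ) :
    quatNorm β₁ β₂ (fibQuat β₁ β₂ n) =
      gfibR (1 + 2 * β₂) (3 * β₂) (2 * n + 2)
        + (β₁ - 1) * gfibR (1 + 2 * β₂) β₂ (2 * n + 3)
        - 2 * (β₁ - 1) * (1 + β₂) * Nat.fib n * Nat.fib (n + 1) := by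
  have h1 : Nat.fib (2 * n + 1) = Nat.fib n ^ 2 + Nat.fib (n + 1) ^ 2 := by
    have := Nat.fib_add n n
    rw [show n + n + 1 = 2 * n + 1 by ring] at this
    rw [this]; ring
  have h2 : Nat.fib (2 * n + 2) =
      Nat.fib n * Nat.fib (n + 1) + Nat.fib (n + 1) * Nat.fib (n + 2) := by
    have := Nat.fib_add n (n + 1)
    rw [show n + (n + 1) + 1 = 2 * n + 2 by ring] at this
    rw [this]
  have h3 : Nat.fib (2 * n + 3) = Nat.fib (n + 1) ^ 2 + Nat.fib (n + 2) ^ 2 := by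
    have := Nat.fib_add (n + 1) (n + 1)
    rw [show n + 1 + (n + 1) + 1 = 2 * n + 3 by ring] at this
    rw [this]; ring
  have e2 : Nat.fib (n + 2) = Nat.fib n + Nat.fib (n + 1) :=
    Nat.fib_add_two
  have e3 : Nat.fib (n + 3) = Nat.fib n + 2 * Nat.fib (n + 1) := by
    rw [show n + 3 = (n + 1) + 2 by ring, Nat.fib_add_two, e2]; omega
  rw [quatNorm, fibQuat,
    show 2 * n + 2 = (2 * n + 1) + 1 from rfl,
    show (2 * n + 1) + 1 + 1 = (2 * n + 2) + 1 from rfl,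
    gfibR_eq, gfibR_eq,
    show (2 * n + 1) + 1 = 2 * n + 2 from rfl, h1, h2, h3, e2, e3]
  push_cast
  ring
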